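/- Let $h$ be a bounded harmonic function on a bounded open set $V \subset \mathbb{R}^2$ such that $\limsup_{z \to y} |h(z)| \le C$ for every $y \in \partial V \setminus \{y_1, \dots, y_n\}$, where $y_1, \dots, y_n$ are finitely many boundary points. Then $|h| \le C$ on all of $V$. -/

import Mathlib

/-- A real-valued function on the complex plane is harmonic on `U` if it is `C²` there and
its Laplacian (sum of the two pure second directional derivatives) vanishes on `U`. -/
def HarmonicOnD (h : ℂ → ℝ) (U : Set ℂ) : Prop :=
  ContDiffOn ℝ 2 h U ∧ ∀ z ∈ U,
    fderiv ℝ (fun w => fderiv ℝ h w 1) z 1 +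
      fderiv ℝ (fun w => fderiv ℝ h w Complex.I) z Complex.I = 0

/-!
Adding `ε log ‖∏_{y ∈ E} (z - y)‖`, which is harmonic on `V`, bounded above there and tends to
`-∞` at the exceptional points, makes the boundary bound hold at every boundary point, up to an
error that vanishes as `ε → 0`. The weak maximum principle then applies: after adding `ε ‖z‖²`
the Laplacian is positive, which the second derivative test along lines rules out at an interior
maximum, while compactness produces such a maximum as soon as the function exceeds its boundary
bound. Applying this to `h` and `-h` bounds `|h|`.
-/

open Filter Set Topology Laplacian InnerProductSpace Bornology

theorem IsLocalMax.deriv_deriv_nonpos {g : ℝ → ℝ} {t : ℝ} (hg : IsLocalMax g t)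
    (hc : ContinuousAt g t) : deriv (deriv g) t ≤ 0 := by
  by_contra! hpos
  have hmin := isLocalMin_of_deriv_deriv_pos hpos hg.deriv_eq_zero hc
  have hconst : g =ᶠ[𝓝 t] fun _ => g t :=
    (hg.and hmin).mono fun s hs => le_antisymm hs.1 hs.2
  have : deriv (deriv g) t = 0 := by
    rw [hconst.deriv.deriv_eq]; simp
  linarith

theorem fderiv_fderiv_apply_eq_iteratedFDeriv {𝕜 E F : Type*} [NontriviallyNormedField 𝕜]
    [NormedAddCommGroup E] [NormedSpace 𝕜 E] [NormedAddCommGroup F] [NormedSpace 𝕜 F]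
    {f : E → F} {z : E}
    (hf : DifferentiableAt 𝕜 (fderiv 𝕜 f) z) (u v : E) :
    fderiv 𝕜 (fun w => fderiv 𝕜 f w v) z u = iteratedFDeriv 𝕜 2 f z ![u, v] := by
  rw [fderiv_clm_apply hf (differentiableAt_const v), iteratedFDeriv_two_apply]
  simp

theorem IsLocalMax.iteratedFDeriv_two_nonpos {E : Type*} [NormedAddCommGroup E]
    [NormedSpace ℝ E] {f : E → ℝ} {p : E} (hmax : IsLocalMax f p) (hf : ContDiffAt ℝ 2 f p)
    (v : E) : iteratedFDeriv ℝ 2 f p ![v, v] ≤ 0 := by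
  set c : ℝ → E := fun t => p + t • v
  have hc : Continuous c := by fun_prop
  have hcd : ∀ t, HasDerivAt c v t := fun t => by
    simpa [c] using ((hasDerivAt_id t).smul_const v).const_add p
  have hc0 : c 0 = p := by simp [c]
  have hD : DifferentiableAt ℝ (fderiv ℝ f) p :=
    (hf.fderiv_right (m := 1) le_rfl).differentiableAt one_ne_zero
  have hderiv : deriv (f ∘ c) =ᶠ[𝓝 0] fun t => fderiv ℝ f (c t) v := by
    have hdiff : ∀ᶠ w in 𝓝 p, DifferentiableAt ℝ f w :=
      (hf.eventually (by simp)).mono fun w hw => hw.differentiableAt two_ne_zero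
    rw [← hc0] at hdiff
    filter_upwards [hc.continuousAt.eventually hdiff] with t ht
    exact (ht.hasFDerivAt.comp_hasDerivAt t (hcd t)).deriv
  have hsecond : deriv (deriv (f ∘ c)) 0 = iteratedFDeriv ℝ 2 f p ![v, v] := by
    rw [hderiv.deriv_eq, ← fderiv_fderiv_apply_eq_iteratedFDeriv hD]
    have hv : DifferentiableAt ℝ (fun w => fderiv ℝ f w v) (c 0) := by
      rw [hc0]; fun_prop
    exact (hv.hasFDerivAt.comp_hasDerivAt 0 (hcd 0)).deriv.trans (by rw [hc0])
  rw [← hsecond]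
  rw [← hc0] at hmax hf
  exact (hmax.comp_continuous hc.continuousAt).deriv_deriv_nonpos
    (hf.continuousAt.comp hc.continuousAt)

section

variable {E : Type*} [NormedAddCommGroup E] [InnerProductSpace ℝ E] [FiniteDimensional ℝ E]

theorem IsLocalMax.laplacian_nonpos {f : E → ℝ} {p : E} (hmax : IsLocalMax f p)
    (hf : ContDiffAt ℝ 2 f p) : Δ f p ≤ 0 := by
  rw [laplacian_eq_iteratedFDeriv_stdOrthonormalBasis]
  exact Finset.sum_nonpos fun i _ => hmax.iteratedFDeriv_two_nonpos hf _

theorem laplacian_norm_sq (x : E) :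
    Δ (fun x : E => ‖x‖ ^ 2) x = 2 * Module.finrank ℝ E := by
  have hlin : fderiv ℝ (fun x : E => ‖x‖ ^ 2) = ⇑((2 : ℝ) • innerSL ℝ (E := E)) := by
    ext1; simp [two_smul]
  have hsecond (u v : E) :
      iteratedFDeriv ℝ 2 (fun x : E => ‖x‖ ^ 2) x ![u, v] = 2 * inner ℝ u v := by
    rw [iteratedFDeriv_two_apply, hlin, ContinuousLinearMap.fderiv]
    simp only [Matrix.cons_val_zero, Matrix.cons_val_one, smul_apply, smul_eq_mul]
    rfl
  simp [laplacian_eq_iteratedFDeriv_stdOrthonormalBasis, hsecond, mul_comm]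

end

theorem HarmonicOnD.harmonicOnNhd {h : ℂ → ℝ} {V : Set ℂ} (hV : IsOpen V)
    (hh : HarmonicOnD h V) : HarmonicOnNhd h V := by
  have hΔ : ∀ z ∈ V, Δ h z = 0 := by
    intro z hz
    have hD : DifferentiableAt ℝ (fderiv ℝ h) z :=
      ((hh.1.contDiffAt (hV.mem_nhds hz)).fderiv_right (m := 1) le_rfl).differentiableAt
        one_ne_zero
    rw [laplacian_eq_iteratedFDeriv_complexPlane]
    dsimp only
    rw [← fderiv_fderiv_apply_eq_iteratedFDeriv hD,
      ← fderiv_fderiv_apply_eq_iteratedFDeriv hD]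
    exact hh.2 z hz
  exact fun z hz => ⟨hh.1.contDiffAt (hV.mem_nhds hz),
    eventually_of_mem (hV.mem_nhds hz) hΔ⟩

theorem isCompact_setOf_le_of_frontier {X : Type*} [PseudoMetricSpace X] [ProperSpace X]
    {V : Set X} (hVb : IsBounded V) {φ : X → ℝ} (hφ : ContinuousOn φ V) {c : ℝ}
    (hfr : ∀ p ∈ frontier V, ∀ᶠ z in 𝓝[V] p, φ z < c) : IsCompact {z ∈ V | c ≤ φ z} := by
  set K := {z ∈ V | c ≤ φ z}
  have hKV : K ⊆ V := fun z hz => hz.1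
  refine Metric.isCompact_of_isClosed_isBounded (closure_subset_iff_isClosed.1 fun q hq => ?_)
    (hVb.subset hKV)
  have : (𝓝[K] q).NeBot := mem_closure_iff_nhdsWithin_neBot.1 hq
  have hge : ∀ᶠ z in 𝓝[K] q, c ≤ φ z := eventually_nhdsWithin_of_forall fun z hz => hz.2
  by_cases hqV : q ∈ V
  · exact ⟨hqV, ge_of_tendsto ((hφ q hqV).mono hKV) hge⟩
  · have hqfr : q ∈ frontier V := ⟨closure_mono hKV hq, fun h => hqV (interior_subset h)⟩
    obtain ⟨z, hlt, hle⟩ := (((hfr q hqfr).filter_mono (nhdsWithin_mono q hKV)).and hge).exists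
    exact absurd hle (not_le.2 hlt)

theorem exists_isMaxOn_of_frontier {X : Type*} [PseudoMetricSpace X] [ProperSpace X]
    {V : Set X} (hVb : IsBounded V) {φ : X → ℝ} (hφ : ContinuousOn φ V) {c : ℝ}
    (hfr : ∀ p ∈ frontier V, ∀ᶠ z in 𝓝[V] p, φ z < c) {z₀ : X} (hz₀ : z₀ ∈ V)
    (hc : c ≤ φ z₀) : ∃ zs ∈ V, IsMaxOn φ V zs := by
  obtain ⟨zs, hzs, hmax⟩ := (isCompact_setOf_le_of_frontier hVb hφ hfr).exists_isMaxOn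
    ⟨z₀, hz₀, hc⟩ (hφ.mono fun z hz => hz.1)
  refine ⟨zs, hzs.1, fun z hz => ?_⟩
  by_cases hcz : c ≤ φ z
  · exact hmax ⟨hz, hcz⟩
  · exact (not_le.1 hcz).le.trans hzs.2

theorem le_of_forall_pos_le_add_mul {a b k : ℝ} (h : ∀ ε > 0, a ≤ b + ε * k) : a ≤ b := by
  have hlim : Tendsto (fun ε => b + ε * k) (𝓝[>] 0) (𝓝 b) := by
    have hcont : Continuous fun ε : ℝ => b + ε * k := by fun_prop
    simpa using (hcont.tendsto 0).mono_left nhdsWithin_le_nhds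
  exact ge_of_tendsto hlim (eventually_nhdsWithin_of_forall h)

theorem tendsto_log_norm_nhdsWithin_atBot {X F : Type*} [TopologicalSpace X]
    [NormedAddCommGroup F] {g : X → F} {p : X} {V : Set X} (hg : ContinuousAt g p)
    (hgp : g p = 0) (hgV : ∀ z ∈ V, g z ≠ 0) :
    Tendsto (fun z => Real.log ‖g z‖) (𝓝[V] p) atBot := by
  refine Real.tendsto_log_nhdsGT_zero.comp (tendsto_nhdsWithin_iff.2 ⟨?_, ?_⟩)
  · simpa [hgp] using hg.norm.mono_left nhdsWithin_le_nhds
  · exact eventually_nhdsWithin_of_forall fun z hz => norm_pos_iff.2 (hgV z hz)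

section MaximumPrinciple

variable {E : Type*} [NormedAddCommGroup E] [InnerProductSpace ℝ E] [FiniteDimensional ℝ E]
  {V : Set E}

theorem lt_of_frontier_of_laplacian_pos (hV : IsOpen V) (hVb : IsBounded V) {φ : E → ℝ}
    (hφ : ∀ z ∈ V, ContDiffAt ℝ 2 φ z) (hΔ : ∀ z ∈ V, 0 < Δ φ z) {c : ℝ}
    (hfr : ∀ p ∈ frontier V, ∀ᶠ z in 𝓝[V] p, φ z < c) : ∀ z ∈ V, φ z < c := by
  by_contra! ⟨z₀, hz₀, hc⟩
  obtain ⟨zs, hzs, hmax⟩ := exists_isMaxOn_of_frontier hVb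
    (fun z hz => (hφ z hz).continuousAt.continuousWithinAt) hfr hz₀ hc
  exact (hΔ zs hzs).not_ge ((hmax.isLocalMax (hV.mem_nhds hzs)).laplacian_nonpos (hφ zs hzs))

theorem InnerProductSpace.HarmonicOnNhd.le_of_frontier [Nontrivial E] (hV : IsOpen V)
    (hVb : IsBounded V) {f : E → ℝ} (hf : HarmonicOnNhd f V) {c : ℝ}
    (hfr : ∀ p ∈ frontier V, ∀ c' > c, ∀ᶠ z in 𝓝[V] p, f z < c') : ∀ z ∈ V, f z ≤ c := by
  obtain ⟨R, hR⟩ := isBounded_iff_forall_norm_le.1 hVb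
  intro z hz
  refine le_of_forall_pos_le_add_mul (k := 1 + R ^ 2) fun ε hε => ?_
  have hsq : ∀ z ∈ V, ε * ‖z‖ ^ 2 ≤ ε * R ^ 2 := fun z hz =>
    mul_le_mul_of_nonneg_left (pow_le_pow_left₀ (norm_nonneg z) (hR z hz) 2) hε.le
  have hsmooth : ContDiff ℝ 2 fun x : E => ‖x‖ ^ 2 := contDiff_norm_sq ℝ
  have hεsmooth : ∀ z, ContDiffAt ℝ 2 (ε • fun x : E => ‖x‖ ^ 2) z := fun z =>
    hsmooth.contDiffAt.const_smul ε
  have hlt := lt_of_frontier_of_laplacian_pos hV hVb (φ := f + ε • fun x => ‖x‖ ^ 2)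
    (c := c + ε * (1 + R ^ 2))
    (fun z hz => (hf z hz).1.add (hεsmooth z))
    (fun z hz => by
      rw [(hf z hz).1.laplacian_add (hεsmooth z),
        laplacian_smul ε hsmooth.contDiffAt, (hf z hz).2.self_of_nhds, laplacian_norm_sq]
      have : (0 : ℝ) < Module.finrank ℝ E := by exact_mod_cast Module.finrank_pos
      simp only [Pi.zero_apply, smul_eq_mul, zero_add]
      positivity)
    (fun p hp => by
      filter_upwards [hfr p hp (c + ε) (by linarith), self_mem_nhdsWithin] with w hw hwV
      simp only [Pi.add_apply, Pi.smul_apply, smul_eq_mul]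
      linarith [hsq w hwV])
    z hz
  simp only [Pi.add_apply, Pi.smul_apply, smul_eq_mul] at hlt
  linarith [mul_nonneg hε.le (sq_nonneg ‖z‖)]

end MaximumPrinciple

theorem InnerProductSpace.HarmonicOnNhd.le_of_frontier_diff_finset {V : Set ℂ} (hV : IsOpen V)
    (hVb : IsBounded V) {f : ℂ → ℝ} (hf : HarmonicOnNhd f V) (hbdd : BddAbove (f '' V))
    {E : Finset ℂ} (hEV : Disjoint (E : Set ℂ) V) {c : ℝ}
    (hfr : ∀ p ∈ frontier V \ E, ∀ c' > c, ∀ᶠ z in 𝓝[V] p, f z < c') : ∀ z ∈ V, f z ≤ c := by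
  set P : ℂ → ℂ := fun z => ∏ y ∈ E, (z - y)
  set u : ℂ → ℝ := fun z => Real.log ‖P z‖
  have hPV : ∀ z ∈ V, P z ≠ 0 := fun z hz => Finset.prod_ne_zero_iff.2 fun y hy =>
    sub_ne_zero.2 fun hzy => hEV.ne_of_mem (Finset.mem_coe.2 hy) hz hzy.symm
  have hPc : Continuous P := by fun_prop
  have hu : HarmonicOnNhd u V := fun z hz =>
    (Differentiable.analyticAt (by fun_prop) z).harmonicAt_log_norm (hPV z hz)
  obtain ⟨K, hK⟩ : ∃ K, ∀ z ∈ V, u z ≤ K := by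
    obtain ⟨K, hK⟩ := hVb.isCompact_closure.exists_bound_of_continuousOn hPc.norm.continuousOn
    refine ⟨K, fun z hz => (Real.log_le_self (norm_nonneg _)).trans ?_⟩
    simpa using hK z (subset_closure hz)
  obtain ⟨M, hM⟩ := hbdd
  intro z hz
  refine le_of_forall_pos_le_add_mul (k := K - u z) fun ε hε => ?_
  have hle := (hf.add (hu.const_smul (c := ε))).le_of_frontier hV hVb (c := c + ε * K)
    (fun p hp c' hc' => by
      by_cases hpE : p ∈ E
      · have hlog := tendsto_log_norm_nhdsWithin_atBot hPc.continuousAt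
          (Finset.prod_eq_zero hpE (sub_self p)) hPV
        filter_upwards [hlog.eventually (eventually_lt_atBot ((c' - M) / ε)),
          self_mem_nhdsWithin] with w hw hwV
        simp only [Pi.add_apply, Pi.smul_apply, smul_eq_mul]
        linarith [(lt_div_iff₀' hε).1 hw, hM (mem_image_of_mem f hwV)]
      · filter_upwards [hfr p ⟨hp, hpE⟩ (c' - ε * K) (by linarith), self_mem_nhdsWithin]
          with w hw hwV
        simp only [Pi.add_apply, Pi.smul_apply, smul_eq_mul]
        linarith [mul_le_mul_of_nonneg_left (hK w hwV) hε.le])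
    z hz
  simp only [Pi.add_apply, Pi.smul_apply, smul_eq_mul] at hle
  linarith

theorem stmt_5_general (V : Set ℂ) (hV : IsOpen V) (hVb : Bornology.IsBounded V)
    (h : ℂ → ℝ) (hh : HarmonicOnD h V) (hbd : ∃ M, ∀ z ∈ V, |h z| ≤ M)
    (C : ℝ) (E : Finset ℂ) (hE : ↑E ⊆ frontier V)
    (hlim : ∀ y ∈ frontier V \ (E : Set ℂ),
      Filter.limsup (fun z => |h z|) (nhdsWithin y V) ≤ C) :
    ∀ z ∈ V, |h z| ≤ C := by
  obtain ⟨M, hM⟩ := hbd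
  have hharm := hh.harmonicOnNhd hV
  have hEV : Disjoint (E : Set ℂ) V := (disjoint_frontier_iff_isOpen.2 hV).mono_left hE
  have habs : ∀ p ∈ frontier V \ E, ∀ c' > C, ∀ᶠ w in 𝓝[V] p, |h w| < c' := fun p hp c' hc' =>
    eventually_lt_of_limsup_lt ((hlim p hp).trans_lt hc')
      ⟨M, eventually_map.2 (eventually_nhdsWithin_of_forall hM)⟩
  have hupper := hharm.le_of_frontier_diff_finset hV hVb
    ⟨M, forall_mem_image.2 fun z hz => (le_abs_self _).trans (hM z hz)⟩ hEV
    fun p hp c' hc' => (habs p hp c' hc').mono fun w hw => (le_abs_self _).trans_lt hw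
  have hlower := hharm.neg.le_of_frontier_diff_finset hV hVb
    ⟨M, forall_mem_image.2 fun z hz => (neg_le_abs _).trans (hM z hz)⟩ hEV
    fun p hp c' hc' => (habs p hp c' hc').mono fun w hw => (neg_le_abs _).trans_lt hw
  exact fun z hz => abs_le.2 ⟨neg_le.1 (hlower z hz), hupper z hz⟩

/-- Lindelöf-type maximum principle: a bounded harmonic function on a bounded open planar
set whose boundary limsup of the absolute value is at most `C` off finitely many boundary
points is bounded by `C` everywhere. -/
theorem stmt_5 (V : Set ℂ) (hV : IsOpen V) (hVb : Bornology.IsBounded V)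
    (h : ℂ → ℝ) (hh : HarmonicOnD h V) (hbd : ∃ M, ∀ z ∈ V, |h z| ≤ M)
    (C : ℝ) (hC : 0 ≤ C) (E : Finset ℂ) (hE : ↑E ⊆ frontier V)
    (hlim : ∀ y ∈ frontier V \ (E : Set ℂ),
      Filter.limsup (fun z => |h z|) (nhdsWithin y V) ≤ C) :
    ∀ z ∈ V, |h z| ≤ C :=
  stmt_5_general V hV hVb h hh hbd C E hE hlim
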